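/- arXiv:2108.10900 — 5 statements merged into one kernel-verified Lean document; each statement's English description precedes it below -/
import Mathlib

section
/- Let X be a finite set in a metric space, ε > 0, p a point of the space, and x an element of X nearest to p. If for every y ∈ X the point p does not lie in the lens L_ε(x,y) = B(x, dist(x,y)/(1+ε)) ∩ B(y, dist(x,y)/(1+ε)), then x is a (1+ε)-approximation of p with respect to X, i.e., dist(y, x) ≤ (1+ε)·dist(y, p) for all y ∈ X. -/
/-- Lemma 1: if `x` is an element of `X` nearest to `p` and `p` lies in no lens
`L_ε(x,y)`, `y ∈ X`, then `x` is a `(1+ε)`-approximation of `p` w.r.t. `X`. -/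
theorem nearest_outside_lenses_is_approx {M : Type*} [MetricSpace M]
    (X : Finset M) (ε : ℝ) (hε : 0 < ε) (p x : M) (hx : x ∈ X)
    (hnear : ∀ y ∈ X, dist x p ≤ dist y p)
    (hlens : ∀ y ∈ X,
      p ∉ Metric.closedBall x (dist x y / (1 + ε)) ∩
          Metric.closedBall y (dist x y / (1 + ε))) :
    ∀ y ∈ X, dist y x ≤ (1 + ε) * dist y p := by
  intro y hy
  have h := hlens y hy
  have hε1 : (0:ℝ) < 1 + ε := by linarith
  have e1 : dist y x = dist x y := dist_comm y x
  have e2 : dist p x = dist x p := dist_comm p x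
  have e3 : dist p y = dist y p := dist_comm p y
  have hn := hnear y hy
  rw [Set.mem_inter_iff, not_and_or, Metric.mem_closedBall, Metric.mem_closedBall] at h
  rcases h with h | h <;> push_neg at h <;> rw [div_lt_iff₀ hε1] at h <;> nlinarith
end

section
/- Let X be a finite set in a metric space, ε > 0, and C a finite subset of the space. Suppose that for every x₁, x₂ ∈ X and every point p in the lens L_ε(x₁,x₂), there exists c ∈ C with dist(p, c) ≤ ε·min(dist(x₁,p), dist(x₂,p)). Then X ∪ C is a (1+ε)-approximate centers collection for X: every point u of the space has a point u' ∈ X ∪ C with dist(y, u') ≤ (1+ε)·dist(y, u) for all y ∈ X. -/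
/-- Lemma 3: if every point `p` of each lens `L_ε(x₁,x₂)`, `x₁,x₂ ∈ X`, lies at
distance at most `ε * min (dist x₁ p) (dist x₂ p)` from a finite set `C`, then
`X ∪ C` is a `(1+ε)`-approximate centers collection for `X`. -/
theorem lens_covering_gives_collection {M : Type*} [MetricSpace M] [DecidableEq M]
    (X : Finset M) (hX : X.Nonempty) (ε : ℝ) (hε : 0 < ε) (C : Finset M)
    (hcov : ∀ x₁ ∈ X, ∀ x₂ ∈ X, ∀ p : M,
      p ∈ Metric.closedBall x₁ (dist x₁ x₂ / (1 + ε)) ∩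
          Metric.closedBall x₂ (dist x₁ x₂ / (1 + ε)) →
      ∃ c ∈ C, dist p c ≤ ε * min (dist x₁ p) (dist x₂ p)) :
    ∀ u : M, ∃ u' ∈ X ∪ C, ∀ y ∈ X, dist y u' ≤ (1 + ε) * dist y u := by
  intro u
  obtain ⟨x₁, hx₁X, hx₁min⟩ := X.exists_min_image (fun y => dist y u) hX
  by_cases h : ∀ y ∈ X, dist y x₁ ≤ (1 + ε) * dist y u
  · exact ⟨x₁, Finset.mem_union_left _ hx₁X, h⟩
  · push_neg at h
    obtain ⟨x₂, hx₂X, hx₂⟩ := h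
    have h1ε : (0:ℝ) < 1 + ε := by linarith
    have hu2 : dist x₂ u ≤ dist x₁ x₂ / (1 + ε) := by
      rw [le_div_iff₀ h1ε, dist_comm x₁ x₂]
      nlinarith [hx₂]
    have h12 : dist x₁ u ≤ dist x₂ u := hx₁min x₂ hx₂X
    have hu1 : dist x₁ u ≤ dist x₁ x₂ / (1 + ε) := h12.trans hu2
    obtain ⟨c, hcC, hc⟩ := hcov x₁ hx₁X x₂ hx₂X u
      ⟨Metric.mem_closedBall.2 (by rw [dist_comm]; exact hu1),
       Metric.mem_closedBall.2 (by rw [dist_comm]; exact hu2)⟩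
    refine ⟨c, Finset.mem_union_right _ hcC, fun y hy => ?_⟩
    have hymin : dist x₁ u ≤ dist y u := hx₁min y hy
    have hmin : min (dist x₁ u) (dist x₂ u) ≤ dist x₁ u := min_le_left _ _
    calc dist y c ≤ dist y u + dist u c := dist_triangle _ _ _
      _ ≤ (1 + ε) * dist y u := by nlinarith [hc]
end

section
/- Let X be a finite set in a metric space, ε > 0, I a positive integer, δ = ε^(1+1/I), and for x₁,x₂ ∈ X and 0 ≤ i ≤ I define d_i(x₁,x₂) = dist(x₁,x₂)·ε^(1−i/I)/(1+ε). If a finite set C satisfies that for each x₁,x₂ ∈ X and each i ∈ {1,…,I} the ball B(x₁, d_i(x₁,x₂)) is covered by the balls B(c, δ·d_i(x₁,x₂)) over c ∈ C, then X ∪ C is a (1+ε)-approximate centers collection for X. -/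
/-- Lemma 4: if a finite set `C` covers each ball `B(x₁, d_i(x₁,x₂))`,
`x₁,x₂ ∈ X`, `i = 1,…,I`, by balls of radius `δ * d_i(x₁,x₂)` where
`δ = ε^(1+1/I)` and `d_i(x₁,x₂) = dist x₁ x₂ * ε^(1-i/I) / (1+ε)`, then
`X ∪ C` is a `(1+ε)`-approximate centers collection for `X`. -/
theorem ball_covering_gives_collection {M : Type*} [MetricSpace M] [DecidableEq M]
    (X : Finset M) (hX : X.Nonempty) (ε : ℝ) (hε : 0 < ε) (hε1 : ε < 1)
    (I : ℕ) (hI : 1 ≤ I) (C : Finset M)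
    (hcov : ∀ x₁ ∈ X, ∀ x₂ ∈ X, ∀ i ∈ Finset.Icc 1 I,
      Metric.closedBall x₁ (dist x₁ x₂ * ε ^ (1 - (i : ℝ) / I) / (1 + ε)) ⊆
        ⋃ c ∈ C, Metric.closedBall c
          (ε ^ (1 + 1 / (I : ℝ)) * (dist x₁ x₂ * ε ^ (1 - (i : ℝ) / I) / (1 + ε)))) :
    ∀ u : M, ∃ u' ∈ X ∪ C, ∀ y ∈ X, dist y u' ≤ (1 + ε) * dist y u := by
  intro u
  obtain ⟨x₁, hx₁X, hx₁min⟩ := X.exists_min_image (fun y => dist u y) hX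
  set R := dist u x₁ with hRdef
  have hRnn : (0:ℝ) ≤ R := dist_nonneg
  have h1ε : (0:ℝ) < 1 + ε := by linarith
  have hIR : (0:ℝ) < (I : ℝ) := by exact_mod_cast hI
  by_cases hcase : ∃ x₂ ∈ X, (1 + ε) * R ≤ dist x₁ x₂ ∧ ε * dist x₁ x₂ ≤ (1 + ε) * R
  · obtain ⟨x₂, hx₂X, hle, hge⟩ := hcase
    set D := dist x₁ x₂ with hDdef
    set d : ℕ → ℝ := fun i => D * ε ^ (1 - (i : ℝ) / I) / (1 + ε) with hd
    have hRdI : R ≤ d I := by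
      have : (1 : ℝ) - (I : ℝ) / I = 0 := by field_simp; ring
      simp only [hd, this, Real.rpow_zero, mul_one]
      rw [le_div_iff₀ h1ε]
      linarith
    have hd0R : d 0 ≤ R := by
      have : (1 : ℝ) - (0 : ℝ) / I = 1 := by simp
      simp only [hd, Nat.cast_zero, this, Real.rpow_one]
      rw [div_le_iff₀ h1ε]
      linarith [hge]
    -- minimal i in Icc 1 I with R ≤ d i
    have hSne : ((Finset.Icc 1 I).filter (fun i => R ≤ d i)).Nonempty := by
      refine ⟨I, Finset.mem_filter.2 ⟨Finset.mem_Icc.2 ⟨hI, le_rfl⟩, hRdI⟩⟩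
    set i := ((Finset.Icc 1 I).filter (fun i => R ≤ d i)).min' hSne with hidef
    have hiS := ((Finset.Icc 1 I).filter (fun i => R ≤ d i)).min'_mem hSne
    rw [Finset.mem_filter] at hiS
    obtain ⟨hiIcc, hiR⟩ := hiS
    obtain ⟨hi1, hiI⟩ := Finset.mem_Icc.1 hiIcc
    have hdprev : d (i - 1) ≤ R := by
      rcases Nat.lt_or_ge 1 i with h1i | h1i
      · by_contra hcon
        push_neg at hcon
        have hmem : i - 1 ∈ (Finset.Icc 1 I).filter (fun i => R ≤ d i) := by
          refine Finset.mem_filter.2 ⟨Finset.mem_Icc.2 ⟨by omega, by omega⟩, le_of_lt hcon⟩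
        have := Finset.min'_le _ _ hmem
        omega
      · have : i = 1 := le_antisymm h1i hi1
        rw [this]
        simpa using hd0R
    -- u belongs to the ball around x₁ of radius d i
    have humem : u ∈ Metric.closedBall x₁ (d i) := by
      rw [Metric.mem_closedBall]
      exact hiR
    have hsub := hcov x₁ hx₁X x₂ hx₂X i hiIcc humem
    simp only [Set.mem_iUnion, Metric.mem_closedBall] at hsub
    obtain ⟨c, hcC, hdist⟩ := hsub
    have hkey : ε ^ (1 + 1 / (I : ℝ)) * d i = ε * d (i - 1) := by
      have hcast : ((i - 1 : ℕ) : ℝ) = (i : ℝ) - 1 := by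
        have : (1:ℕ) ≤ i := hi1
        push_cast [this]
        ring
      have hpow : ε ^ (1 + 1 / (I:ℝ)) * ε ^ (1 - (i:ℝ)/I) =
          ε * ε ^ (1 - ((i:ℝ) - 1)/I) := by
        rw [← Real.rpow_add hε,
          show (1 + 1/(I:ℝ)) + (1 - (i:ℝ)/I) = 1 + (1 - ((i:ℝ) - 1)/I) by ring,
          Real.rpow_add hε, Real.rpow_one]
      simp only [hd, hcast]
      linear_combination (D / (1 + ε)) * hpow
    have hduc : dist u c ≤ ε * R := by
      calc dist u c ≤ ε ^ (1 + 1 / (I : ℝ)) * d i := hdist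
        _ = ε * d (i - 1) := hkey
        _ ≤ ε * R := by nlinarith [hdprev]
    refine ⟨c, Finset.mem_union.2 (Or.inr hcC), fun y hy => ?_⟩
    have hRy : R ≤ dist u y := hx₁min y hy
    calc dist y c ≤ dist y u + dist u c := dist_triangle y u c
      _ ≤ dist y u + ε * R := by linarith
      _ ≤ (1 + ε) * dist y u := by rw [dist_comm y u]; nlinarith
  · push_neg at hcase
    refine ⟨x₁, Finset.mem_union.2 (Or.inl hx₁X), fun y hy => ?_⟩
    have hRy : R ≤ dist u y := hx₁min y hy
    have htri : dist y x₁ ≤ dist y u + R := dist_triangle y u x₁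
    rcases le_or_gt ((1 + ε) * R) (dist x₁ y) with h | h
    · have h2 := hcase y hy
      rw [dist_comm x₁ y] at h
      have h3 : (1 + ε) * R < ε * dist y x₁ := by
        have := h2
        rw [dist_comm x₁ y] at this
        by_contra hcon
        push_neg at hcon
        exact absurd (this h) (not_lt.2 hcon)
      rw [dist_comm u y] at hRy
      nlinarith
    · rw [dist_comm x₁ y] at h
      rw [dist_comm u y] at hRy
      nlinarith
end

section
/- Let X be a finite set in a metric space, ε ∈ (0,1), I a positive integer, δ = ε^(1+1/I), t > 2, and let {A_k, B_k}, k = 1,…,s, be a t-WSPD of X with representatives a_k ∈ A_k, b_k ∈ B_k. Define d_i(a_k,b_k) = dist(a_k,b_k)·ε^(1−i/I)/(1+ε) and r_i(k,t) = d_i(a_k,b_k)(1+2/t) + dist(a_k,b_k)/t. Suppose a finite set C satisfies that for every k, every i ∈ {1,…,I}, and x ∈ {a_k, b_k}, the ball B(x, r_i(k,t)) is covered by the balls B(c, δ·d_i(a_k,b_k)(1−2/t)) over c ∈ C. Then X ∪ C is a (1+ε)-approximate centers collection for X. -/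
/-- Lemma 5: given a `t`-WSPD of `X` with `t > 2` and a finite set `C` such
that each ball `B(x, r_i(k,t))`, `x ∈ {a_k, b_k}`, is covered by balls of
radius `δ * d_i(a_k,b_k) * (1 - 2/t)` centered at points of `C`, the set
`X ∪ C` is a `(1+ε)`-approximate centers collection for `X`. -/
theorem wspd_covering_gives_collection {M : Type*} [MetricSpace M] [DecidableEq M]
    (X : Finset M) (hX : X.Nonempty) (ε : ℝ) (hε : 0 < ε) (hε1 : ε < 1)
    (I : ℕ) (hI : 1 ≤ I) (t : ℝ) (ht : 2 < t) (s : ℕ)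
    (A B : Fin s → Finset M)
    (hA : ∀ k, (A k : Set M) ⊆ X) (hB : ∀ k, (B k : Set M) ⊆ X)
    (hdisj : ∀ k, Disjoint (A k) (B k))
    (hcover : ∀ x ∈ X, ∀ y ∈ X, x ≠ y →
      ∃ k, (x ∈ A k ∧ y ∈ B k) ∨ (x ∈ B k ∧ y ∈ A k))
    (hsep : ∀ k, ∀ a ∈ A k, ∀ b ∈ B k,
      t * max (Metric.diam (A k : Set M)) (Metric.diam (B k : Set M)) ≤ dist a b)
    (a b : Fin s → M) (ha : ∀ k, a k ∈ A k) (hb : ∀ k, b k ∈ B k)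
    (C : Finset M)
    (hC : ∀ k : Fin s, ∀ i ∈ Finset.Icc 1 I, ∀ x ∈ ({a k, b k} : Set M),
      Metric.closedBall x
          (dist (a k) (b k) * ε ^ (1 - (i : ℝ) / I) / (1 + ε) * (1 + 2 / t) +
            dist (a k) (b k) / t) ⊆
        ⋃ c ∈ C, Metric.closedBall c
          (ε ^ (1 + 1 / (I : ℝ)) *
            (dist (a k) (b k) * ε ^ (1 - (i : ℝ) / I) / (1 + ε)) * (1 - 2 / t))) :
    ∀ u : M, ∃ u' ∈ X ∪ C, ∀ y ∈ X, dist y u' ≤ (1 + ε) * dist y u := by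
  classical
  intro u
  obtain ⟨x₀, hx₀X, hx₀min⟩ := X.exists_min_image (fun x => dist x u) hX
  by_cases hgood : ∀ y ∈ X, dist y x₀ ≤ (1 + ε) * dist y u
  · exact ⟨x₀, Finset.mem_union_left _ hx₀X, hgood⟩
  push_neg at hgood
  obtain ⟨y₀, hy₀X, hy₀⟩ := hgood
  have hεp : (0:ℝ) < 1 + ε := by linarith
  have htp : (0:ℝ) < t := by linarith
  have hRy : dist x₀ u ≤ dist y₀ u := hx₀min y₀ hy₀X
  have htri : dist y₀ x₀ ≤ dist y₀ u + dist x₀ u := by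
    rw [dist_comm x₀ u]; exact dist_triangle y₀ u x₀
  have hxy1 : (1 + ε) * dist x₀ u < dist x₀ y₀ := by
    rw [dist_comm x₀ y₀]; nlinarith
  have hxy2 : ε * dist x₀ y₀ < (1 + ε) * dist x₀ u := by
    rw [dist_comm x₀ y₀]; nlinarith
  have hRnn : 0 ≤ dist x₀ u := dist_nonneg
  have hRpos : 0 < dist x₀ u := by nlinarith [dist_nonneg (x := x₀) (y := y₀)]
  have hdxy : 0 < dist x₀ y₀ := by nlinarith
  have hne : x₀ ≠ y₀ := dist_pos.1 hdxy
  obtain ⟨k, hk⟩ := hcover x₀ hx₀X y₀ hy₀X hne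
  have hab : a k ≠ b k := fun h => Finset.disjoint_left.1 (hdisj k) (ha k) (h ▸ hb k)
  have hDpos : 0 < dist (a k) (b k) := dist_pos.2 hab
  have hsepk := hsep k (a k) (ha k) (b k) (hb k)
  have hdiamA : Metric.diam (A k : Set M) ≤ dist (a k) (b k) / t := by
    rw [le_div_iff₀ htp]
    have h1 : t * Metric.diam (A k : Set M) ≤
        t * max (Metric.diam (A k : Set M)) (Metric.diam (B k : Set M)) :=
      mul_le_mul_of_nonneg_left (le_max_left _ _) htp.le
    linarith
  have hdiamB : Metric.diam (B k : Set M) ≤ dist (a k) (b k) / t := by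
    rw [le_div_iff₀ htp]
    have h1 : t * Metric.diam (B k : Set M) ≤
        t * max (Metric.diam (A k : Set M)) (Metric.diam (B k : Set M)) :=
      mul_le_mul_of_nonneg_left (le_max_right _ _) htp.le
    linarith
  have key : ∃ xr ∈ ({a k, b k} : Set M), dist x₀ xr ≤ dist (a k) (b k) / t ∧
      dist x₀ y₀ ≤ dist (a k) (b k) + 2 * (dist (a k) (b k) / t) ∧
      dist (a k) (b k) ≤ dist x₀ y₀ + 2 * (dist (a k) (b k) / t) := by
    rcases hk with ⟨hxA, hyB⟩ | ⟨hxB, hyA⟩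
    · have h1 : dist x₀ (a k) ≤ dist (a k) (b k) / t :=
        (Metric.dist_le_diam_of_mem ((A k).finite_toSet.isBounded) hxA (ha k)).trans hdiamA
      have h2 : dist (b k) y₀ ≤ dist (a k) (b k) / t :=
        (Metric.dist_le_diam_of_mem ((B k).finite_toSet.isBounded) (hb k) hyB).trans hdiamB
      refine ⟨a k, Set.mem_insert _ _, h1, ?_, ?_⟩
      · have h3 := dist_triangle4 x₀ (a k) (b k) y₀
        linarith
      · have h3 := dist_triangle4 (a k) x₀ y₀ (b k)
        have h4 : dist (a k) x₀ ≤ dist (a k) (b k) / t := by rwa [dist_comm]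
        have h5 : dist y₀ (b k) ≤ dist (a k) (b k) / t := by rwa [dist_comm] at h2
        linarith
    · have h1 : dist x₀ (b k) ≤ dist (a k) (b k) / t :=
        (Metric.dist_le_diam_of_mem ((B k).finite_toSet.isBounded) hxB (hb k)).trans hdiamB
      have h2 : dist (a k) y₀ ≤ dist (a k) (b k) / t :=
        (Metric.dist_le_diam_of_mem ((A k).finite_toSet.isBounded) (ha k) hyA).trans hdiamA
      refine ⟨b k, Set.mem_insert_of_mem _ rfl, h1, ?_, ?_⟩
      · have h3 := dist_triangle4 x₀ (b k) (a k) y₀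
        have h4 : dist (b k) (a k) = dist (a k) (b k) := dist_comm _ _
        linarith
      · have h3 := dist_triangle4 (a k) y₀ x₀ (b k)
        have h4 : dist y₀ x₀ = dist x₀ y₀ := dist_comm _ _
        linarith
  obtain ⟨xr, hxrmem, hxrd, hDub, hDlb⟩ := key
  set d : ℕ → ℝ := fun i => dist (a k) (b k) * ε ^ (1 - (i:ℝ)/I) / (1+ε) with hdfun
  have hdpos : ∀ i, 0 < d i := by
    intro i
    simp only [hdfun]
    positivity
  have hIne : (I:ℝ) ≠ 0 := Nat.cast_ne_zero.2 (by omega)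
  have hdI : dist x₀ u ≤ d I * (1 + 2/t) := by
    have he : (1:ℝ) - (I:ℝ)/I = 0 := by field_simp; norm_num
    simp only [hdfun, he, Real.rpow_zero, mul_one]
    rw [div_mul_eq_mul_div, le_div_iff₀ hεp]
    have : dist (a k) (b k) * (1 + 2/t) = dist (a k) (b k) + 2 * (dist (a k) (b k) / t) := by
      ring
    nlinarith
  have hSne : ((Finset.Icc 1 I).filter (fun i => dist x₀ u ≤ d i * (1 + 2/t))).Nonempty :=
    ⟨I, Finset.mem_filter.2 ⟨Finset.mem_Icc.2 ⟨hI, le_refl I⟩, hdI⟩⟩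
  set i₀ := ((Finset.Icc 1 I).filter (fun i => dist x₀ u ≤ d i * (1 + 2/t))).min' hSne
    with hi₀def
  have hi₀mem := Finset.min'_mem _ hSne
  rw [Finset.mem_filter, ← hi₀def] at hi₀mem
  obtain ⟨hi₀Icc, hi₀R⟩ := hi₀mem
  obtain ⟨h1i, hiI⟩ := Finset.mem_Icc.1 hi₀Icc
  clear_value d
  clear_value i₀
  have hkey : ε ^ (1 + 1/(I:ℝ)) * d i₀ * (1 - 2/t) ≤ ε * dist x₀ u := by
    rcases eq_or_lt_of_le h1i with h1 | h2
    · -- i₀ = 1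
      have hP : dist (a k) (b k) * (1 - 2/t) ≤ dist x₀ y₀ := by
        have h' : dist (a k) (b k) * (1 - 2/t)
            = dist (a k) (b k) - 2 * (dist (a k) (b k) / t) := by ring
        linarith
      have hεP : ε * (dist (a k) (b k) * (1 - 2/t)) ≤ (1 + ε) * dist x₀ u := by
        have := mul_le_mul_of_nonneg_left hP hε.le
        linarith
      rw [← h1]
      simp only [hdfun, Nat.cast_one]
      have hsq : ε ^ ((1:ℝ) + 1/I) * ε ^ ((1:ℝ) - 1/I) = ε^2 := by
        rw [← Real.rpow_natCast ε 2, ← Real.rpow_add hε]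
        congr 1
        push_cast
        ring
      have hre : ε ^ ((1:ℝ) + 1/I) * (dist (a k) (b k) * ε ^ ((1:ℝ) - 1/I) / (1+ε)) * (1 - 2/t)
          = ε^2 * (dist (a k) (b k) * (1 - 2/t)) / (1+ε) := by
        rw [← hsq]; ring
      rw [hre, div_le_iff₀ hεp]
      nlinarith [mul_le_mul_of_nonneg_left hεP hε.le]
    · -- 2 ≤ i₀
      have hj : i₀ - 1 ∈ Finset.Icc 1 I := Finset.mem_Icc.2 ⟨by omega, by omega⟩
      have hjnot : ¬ dist x₀ u ≤ d (i₀ - 1) * (1 + 2/t) := by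
        intro hcon
        have hmem : i₀ - 1 ∈ ((Finset.Icc 1 I).filter
            (fun i => dist x₀ u ≤ d i * (1 + 2/t))) := Finset.mem_filter.2 ⟨hj, hcon⟩
        have h6 := Finset.min'_le _ _ hmem
        rw [← hi₀def] at h6
        omega
      push_neg at hjnot
      have hcast : ((i₀ - 1 : ℕ) : ℝ) = (i₀:ℝ) - 1 := by
        rw [Nat.cast_sub h1i, Nat.cast_one]
      have hdj : d (i₀ - 1) = ε ^ ((1:ℝ)/I) * d i₀ := by
        simp only [hdfun, hcast]
        rw [show (1:ℝ) - ((i₀:ℝ) - 1)/I = 1/I + (1 - (i₀:ℝ)/I) by field_simp; ring]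
        rw [Real.rpow_add hε]
        ring
      have hsplit : ε ^ (1 + 1/(I:ℝ)) = ε * ε ^ ((1:ℝ)/I) := by
        rw [Real.rpow_add hε, Real.rpow_one]
      rw [hsplit]
      rw [hdj] at hjnot
      have hq : 0 < ε ^ ((1:ℝ)/I) * d i₀ :=
        mul_pos (Real.rpow_pos_of_pos hε _) (hdpos i₀)
      have h2t : (0:ℝ) < 2/t := by positivity
      have hmul := mul_le_mul_of_nonneg_left hjnot.le hε.le
      have h0 : 0 ≤ ε * (ε ^ ((1:ℝ)/I) * d i₀) * (2/t) := by positivity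
      linarith [hmul, h0]
  have hu : u ∈ Metric.closedBall xr
      (dist (a k) (b k) * ε ^ (1 - (i₀:ℝ)/I) / (1+ε) * (1 + 2/t) + dist (a k) (b k) / t) := by
    rw [Metric.mem_closedBall]
    have h1 : dist u xr ≤ dist u x₀ + dist x₀ xr := dist_triangle u x₀ xr
    have h2 : dist u x₀ = dist x₀ u := dist_comm u x₀
    have h3 := hi₀R
    simp only [hdfun] at h3
    linarith
  have hu2 := hC k i₀ hi₀Icc xr hxrmem hu
  simp only [Set.mem_iUnion, Metric.mem_closedBall, exists_prop] at hu2
  obtain ⟨c, hcC, hcd⟩ := hu2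
  refine ⟨c, Finset.mem_union_right _ hcC, fun y hy => ?_⟩
  have h3 : dist x₀ u ≤ dist y u := hx₀min y hy
  have h4 : dist u c ≤ ε * dist x₀ u := by
    refine le_trans hcd ?_
    have hk' := hkey
    simp only [hdfun] at hk'
    linarith
  have h5 : ε * dist x₀ u ≤ ε * dist y u := mul_le_mul_of_nonneg_left h3 hε.le
  have h6 : dist y c ≤ dist y u + dist u c := dist_triangle y u c
  linarith
end

section
/- Let X be a finite set in a metric space, ε ∈ (0,1), Y a (1+ε)-collection for X, f a continuity-type objective with modulus μ, and β ≥ 1. If (c₁,…,c_k) is a β-approximate minimizer of f over tuples from Y (i.e., f(X;c₁,…,c_k) ≤ β·f(X;c''₁,…,c''_k) for all tuples from Y), then f(X;c₁,…,c_k) ≤ β·μ(1+ε)·f(X;u₁,…,u_k) for every tuple (u₁,…,u_k) of points of the whole space. -/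
/-- A `β`-approximate minimizer of a continuity-type objective `f` over tuples
of centers from a `(1+ε)`-collection `Y` is a `β·μ(1+ε)`-approximate minimizer
over all tuples of points of the whole space. -/
theorem approx_minimizer_over_collection {M : Type*} [MetricSpace M]
    (X : Finset M) (ε : ℝ) (hε : 0 < ε) (hε1 : ε < 1)
    (Y : Set M)
    (hY : ∀ p : M, ∃ p' ∈ Y, ∀ x ∈ X, dist x p' ≤ (1 + ε) * dist x p)
    (k : ℕ) (f : (Fin k → M) → ℝ) (μ : ℝ → ℝ)
    (hf_nonneg : ∀ c, 0 ≤ f c)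
    (hf_cont : ∀ ε' : ℝ, 0 < ε' → ∀ c c' : Fin k → M,
      (∀ x ∈ X, ∀ i, dist x (c' i) ≤ (1 + ε') * dist x (c i)) →
      f c' ≤ μ (1 + ε') * f c)
    (β : ℝ) (hβ : 1 ≤ β) (c : Fin k → M)
    (hmin : ∀ c'' : Fin k → M, (∀ i, c'' i ∈ Y) → f c ≤ β * f c'') :
    ∀ u : Fin k → M, f c ≤ β * μ (1 + ε) * f u := by
  intro u
  choose u' hu'Y hu'd using fun i => hY (u i)
  have h1 : f c ≤ β * f u' := hmin u' hu'Y
  have h2 : f u' ≤ μ (1 + ε) * f u :=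
    hf_cont ε hε u u' (fun x hx i => hu'd i x hx)
  calc f c ≤ β * f u' := h1
    _ ≤ β * (μ (1 + ε) * f u) := by
        exact mul_le_mul_of_nonneg_left h2 (le_trans zero_le_one hβ)
    _ = β * μ (1 + ε) * f u := by ring
end
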